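/- (Strong convexity of the graph objective.) If μ₂ > 0, λ > 0 and δ > 0, then the graph objective h(w) = Σ_{k<l} w_{k,l}·( p_{k,l} + (μ₁/2)·Δ_{k,l} ) + μ₂·( λ‖w‖₂² − Σ_{k=1}^K log(d_k(w) + δ) ) is σ-strongly convex with σ = 2μ₂λ on the nonnegative orthant {w ∈ ℝ^{K(K−1)/2} : w ≥ 0}, with respect to the Euclidean norm. -/

import Mathlib

open scoped BigOperators

/-- Coordinates are indexed by unordered pairs of distinct elements of `[K]`,
represented as ordered pairs `(i,j)` with `i < j`; there are `K(K−1)/2` of them. -/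
abbrev PairIdx (K : ℕ) := {q : Fin K × Fin K // q.1 < q.2}

/-- Weight vectors live in `ℝ^{K(K−1)/2}` with the Euclidean structure. -/
abbrev GVec (K : ℕ) := EuclideanSpace ℝ (PairIdx K)

/-- Degree of user `k`: `d_k(w) = Σ_{l≠k} w_{k,l}`. -/
noncomputable def deg {K : ℕ} (w : GVec K) (k : Fin K) : ℝ :=
  ∑ q : PairIdx K, (if q.1.1 = k ∨ q.1.2 = k then w q else 0)

/-- The graph objective
`h(w) = Σ_{k<l} w_{k,l}(p_{k,l} + (μ₁/2)Δ_{k,l}) + μ₂(λ‖w‖² − Σ_k log(d_k(w) + δ))`. -/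
noncomputable def hObj {K : ℕ} (P Δ : Fin K → Fin K → ℝ) (μ₁ μ₂ lam δ : ℝ)
    (w : GVec K) : ℝ :=
  (∑ q : PairIdx K, w q * (P q.1.1 q.1.2 + μ₁ / 2 * Δ q.1.1 q.1.2))
    + μ₂ * (lam * (∑ q : PairIdx K, (w q) ^ 2)
        - ∑ k : Fin K, Real.log (deg w k + δ))

/-!
On the orthant, `h(w) − μ₂λ‖w‖²` is a linear function of `w` minus `μ₂` times a sum of terms
`log (d_k(w) + δ)`, each the concave logarithm composed with an affine function that stays `≥ δ > 0`.
So it is convex, which in a Euclidean space is the same as `h` being `2μ₂λ`-strongly convex.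
-/

open Real Set

theorem ConcaveOn.sum {𝕜 E β ι : Type*} [Semiring 𝕜] [PartialOrder 𝕜] [AddCommMonoid E]
    [AddCommMonoid β] [PartialOrder β] [IsOrderedAddMonoid β] [SMul 𝕜 E] [Module 𝕜 β]
    {s : Set E} (hs : Convex 𝕜 s) {t : Finset ι} {f : ι → E → β}
    (hf : ∀ i ∈ t, ConcaveOn 𝕜 s (f i)) : ConcaveOn 𝕜 s fun x ↦ ∑ i ∈ t, f i x := by
  classical
  induction t using Finset.induction_on with
  | empty => simpa using concaveOn_const (0 : β) hs
  | insert i t hi ih =>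
    simp_rw [Finset.sum_insert hi]
    exact (hf i (t.mem_insert_self i)).add (ih fun j hj ↦ hf j (Finset.mem_insert_of_mem hj))

theorem concaveOn_log_add {δ : ℝ} (hδ : 0 < δ) : ConcaveOn ℝ (Ici 0) fun t ↦ log (t + δ) :=
  (strictConcaveOn_log_Ioi.concaveOn.translate_left δ).subset
    (fun t (ht : 0 ≤ t) ↦ show 0 < δ + t by positivity) (convex_Ici 0)

section EuclideanSpace

def nonnegOrthant (ι : Type*) : Set (EuclideanSpace ℝ ι) := {w | ∀ i, 0 ≤ w i}

variable {ι : Type*}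

theorem convex_nonnegOrthant : Convex ℝ (nonnegOrthant ι) := by
  intro x hx y hy a b ha hb _ i
  simpa using add_nonneg (mul_nonneg ha (hx i)) (mul_nonneg hb (hy i))

variable [Fintype ι]

def weightedSumₗ (c : ι → ℝ) : EuclideanSpace ℝ ι →ₗ[ℝ] ℝ where
  toFun w := ∑ i, w i * c i
  map_add' x y := by simp only [PiLp.add_apply, add_mul, Finset.sum_add_distrib]
  map_smul' r x := by simp only [PiLp.smul_apply, smul_eq_mul, Finset.mul_sum, mul_assoc,
    RingHom.id_apply]

theorem weightedSumₗ_apply (c : ι → ℝ) (w : EuclideanSpace ℝ ι) :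
    weightedSumₗ c w = ∑ i, w i * c i := rfl

theorem weightedSumₗ_nonneg {c : ι → ℝ} (hc : ∀ i, 0 ≤ c i) {w : EuclideanSpace ℝ ι}
    (hw : w ∈ nonnegOrthant ι) : 0 ≤ weightedSumₗ c w :=
  Finset.sum_nonneg fun i _ ↦ mul_nonneg (hw i) (hc i)

theorem concaveOn_log_weightedSumₗ_add {c : ι → ℝ} (hc : ∀ i, 0 ≤ c i) {δ : ℝ} (hδ : 0 < δ) :
    ConcaveOn ℝ (nonnegOrthant ι) fun w ↦ log (weightedSumₗ c w + δ) :=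
  ((concaveOn_log_add hδ).comp_linearMap (weightedSumₗ c)).subset
    (fun _ hw ↦ weightedSumₗ_nonneg hc hw) convex_nonnegOrthant

end EuclideanSpace

def incidence {K : ℕ} (k : Fin K) (q : PairIdx K) : ℝ := if q.1.1 = k ∨ q.1.2 = k then 1 else 0

theorem deg_eq_weightedSumₗ {K : ℕ} (w : GVec K) (k : Fin K) :
    deg w k = weightedSumₗ (incidence k) w := by
  simp only [deg, weightedSumₗ_apply, incidence, mul_ite, mul_one, mul_zero]

theorem hObj_sub_norm_sq {K : ℕ} (P Δ : Fin K → Fin K → ℝ) (μ₁ μ₂ lam δ : ℝ) (w : GVec K) :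
    hObj P Δ μ₁ μ₂ lam δ w - 2 * μ₂ * lam / 2 * ‖w‖ ^ 2
      = weightedSumₗ (fun q ↦ P q.1.1 q.1.2 + μ₁ / 2 * Δ q.1.1 q.1.2) w
        - μ₂ * ∑ k, log (weightedSumₗ (incidence k) w + δ) := by
  simp only [hObj, deg_eq_weightedSumₗ, EuclideanSpace.real_norm_sq_eq, weightedSumₗ_apply]
  ring

theorem strongConvexOn_hObj {K : ℕ} (P Δ : Fin K → Fin K → ℝ) (μ₁ : ℝ) {μ₂ δ : ℝ} (lam : ℝ)
    (hμ₂ : 0 ≤ μ₂) (hδ : 0 < δ) :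
    StrongConvexOn (nonnegOrthant (PairIdx K)) (2 * μ₂ * lam) (hObj P Δ μ₁ μ₂ lam δ) := by
  rw [strongConvexOn_iff_convex]
  simp_rw [hObj_sub_norm_sq]
  refine ((weightedSumₗ _).convexOn convex_nonnegOrthant).sub (ConcaveOn.smul hμ₂ ?_)
  exact ConcaveOn.sum convex_nonnegOrthant fun k _ ↦
    concaveOn_log_weightedSumₗ_add (fun q ↦ by unfold incidence; split_ifs <;> norm_num) hδ

theorem graph_objective_strong_convexity_general
    (K : ℕ)
    (P Δ : Fin K → Fin K → ℝ)
    (μ₁ μ₂ lam δ : ℝ) (hμ₂ : 0 < μ₂) (hδ : 0 < δ) :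
    ∀ x y : GVec K, (∀ q, 0 ≤ x q) → (∀ q, 0 ≤ y q) →
      ∀ a : ℝ, 0 ≤ a → a ≤ 1 →
        hObj P Δ μ₁ μ₂ lam δ (a • x + (1 - a) • y)
          ≤ a * hObj P Δ μ₁ μ₂ lam δ x + (1 - a) * hObj P Δ μ₁ μ₂ lam δ y
            - (2 * μ₂ * lam) / 2 * (a * (1 - a)) * ‖x - y‖ ^ 2 := by
  intro x y hx hy a ha ha1
  have h := (strongConvexOn_hObj P Δ μ₁ lam hμ₂.le hδ).2 hx hy ha (sub_nonneg.2 ha1)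
    (add_sub_cancel a 1)
  simp only [smul_eq_mul] at h
  linarith

/-- Strong convexity of the graph objective.
If `μ₂ > 0`, `λ > 0`, `δ > 0`, the graph objective is `σ`-strongly convex with
`σ = 2μ₂λ` on the nonnegative orthant, w.r.t. the Euclidean norm. -/
theorem graph_objective_strong_convexity
    (K : ℕ) (hK : 2 ≤ K)
    (P Δ : Fin K → Fin K → ℝ) (hP : ∀ k l, 0 ≤ P k l) (hΔ : ∀ k l, 0 ≤ Δ k l)
    (μ₁ μ₂ lam δ : ℝ) (hμ₁ : 0 ≤ μ₁) (hμ₂ : 0 < μ₂) (hlam : 0 < lam) (hδ : 0 < δ) :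
    ∀ x y : GVec K, (∀ q, 0 ≤ x q) → (∀ q, 0 ≤ y q) →
      ∀ a : ℝ, 0 ≤ a → a ≤ 1 →
        hObj P Δ μ₁ μ₂ lam δ (a • x + (1 - a) • y)
          ≤ a * hObj P Δ μ₁ μ₂ lam δ x + (1 - a) * hObj P Δ μ₁ μ₂ lam δ y
            - (2 * μ₂ * lam) / 2 * (a * (1 - a)) * ‖x - y‖ ^ 2 :=
  graph_objective_strong_convexity_general K P Δ μ₁ μ₂ lam δ hμ₂ hδ
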